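/- arXiv:1207.3261 — 4 statements merged into one kernel-verified Lean document; each statement's English description precedes it below -/
import Mathlib

section
/- The L_p power operator satisfies the composition law I_{p,r} ∘ I_{r,q} = I_{p,q} on Hermitian matrices, for any p, q, r ∈ [1,∞). -/
/-! Conjugating `I_{r,q}(f)` by `σ^{1/(2r)}` cancels its outer powers of `σ` and leaves `|X|^{q/r}`,
`X = σ^{1/(2q)} f σ^{1/(2q)}`. This matrix is already positive, so it is its own absolute value, and
`(|X|^{q/r})^{r/p} = |X|^{q/p}` because real powers of a nonnegative spectrum compose. -/

open Matrix
open scoped ComplexOrder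

noncomputable section

/-- Square complex matrices. -/
abbrev Mat (d : ℕ) := Matrix (Fin d) (Fin d) ℂ

variable {d : ℕ}

/-- `A ^ r` for a selfadjoint matrix `A`, via the continuous functional calculus. -/
def matPow (A : Mat d) (r : ℝ) : Mat d :=
  cfc (fun x : ℝ => x ^ r) A

/-- `|A| = (A† A)^{1/2}`. -/
def matAbs (A : Mat d) : Mat d :=
  cfc Real.sqrt (Aᴴ * A)

/-- Matrix logarithm via the continuous functional calculus. -/
def matLog (A : Mat d) : Mat d :=
  cfc Real.log A

/-- The `σ`-weighted `L_p` norm `‖f‖_{p,σ} = (Tr |σ^{1/(2p)} f σ^{1/(2p)}|^p)^{1/p}`. -/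
def pnorm (σ f : Mat d) (p : ℝ) : ℝ :=
  ((matPow (matAbs (matPow σ (1/(2*p)) * f * matPow σ (1/(2*p)))) p).trace.re) ^ (1/p)

/-- The `L_p` power operator `I_{p,q}(f) = σ^{-1/(2p)} |σ^{1/(2q)} f σ^{1/(2q)}|^{q/p} σ^{-1/(2p)}`. -/
def Ipow (σ : Mat d) (p q : ℝ) (f : Mat d) : Mat d :=
  matPow σ (-(1/(2*p))) *
    matPow (matAbs (matPow σ (1/(2*q)) * f * matPow σ (1/(2*q)))) (q/p) *
      matPow σ (-(1/(2*p)))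

lemma continuousOn_spectrum (g : ℝ → ℝ) (A : Mat d) : ContinuousOn g (spectrum ℝ A) :=
  Matrix.finite_real_spectrum.continuousOn g

lemma continuousOn_image_spectrum (g f : ℝ → ℝ) (A : Mat d) :
    ContinuousOn g (f '' spectrum ℝ A) :=
  (Matrix.finite_real_spectrum.image f).continuousOn g

lemma Matrix.PosDef.spectrum_real_pos {A : Mat d} (hA : A.PosDef) :
    ∀ x ∈ spectrum ℝ A, 0 < x := by
  rintro x hx
  rw [hA.isHermitian.spectrum_real_eq_range_eigenvalues] at hx
  obtain ⟨i, rfl⟩ := hx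
  exact hA.eigenvalues_pos i

lemma isSelfAdjoint_matPow (A : Mat d) (s : ℝ) : IsSelfAdjoint (matPow A s) :=
  cfc_predicate _ _

lemma isSelfAdjoint_matAbs (A : Mat d) : IsSelfAdjoint (matAbs A) :=
  cfc_predicate _ _

lemma matPow_mul_matPow {A : Mat d} (hA : ∀ x ∈ spectrum ℝ A, 0 < x) (s t : ℝ) :
    matPow A s * matPow A t = matPow A (s + t) := by
  rw [matPow, matPow, ← cfc_mul _ _ A (continuousOn_spectrum _ _) (continuousOn_spectrum _ _)]
  exact cfc_congr fun x hx => (Real.rpow_add (hA x hx) s t).symm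

lemma matPow_zero {A : Mat d} (hA : IsSelfAdjoint A) : matPow A 0 = 1 := by
  rw [matPow, cfc_congr fun x _ => Real.rpow_zero x]
  exact cfc_const_one ℝ A hA

lemma spectrum_matAbs_nonneg (A : Mat d) : ∀ x ∈ spectrum ℝ (matAbs A), 0 ≤ x := by
  intro x hx
  rw [matAbs, cfc_map_spectrum Real.sqrt (Aᴴ * A) (IsSelfAdjoint.star_mul_self A)
    (continuousOn_spectrum _ _)] at hx
  obtain ⟨y, -, rfl⟩ := hx
  exact Real.sqrt_nonneg y

lemma spectrum_matPow_nonneg {A : Mat d} (hA : IsSelfAdjoint A)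
    (hA_nonneg : ∀ x ∈ spectrum ℝ A, 0 ≤ x) (s : ℝ) :
    ∀ x ∈ spectrum ℝ (matPow A s), 0 ≤ x := by
  intro x hx
  rw [matPow, cfc_map_spectrum _ A hA (continuousOn_spectrum _ _)] at hx
  obtain ⟨y, hy, rfl⟩ := hx
  exact Real.rpow_nonneg (hA_nonneg y hy) s

lemma matAbs_of_spectrum_nonneg {A : Mat d} (hA : IsSelfAdjoint A)
    (hA_nonneg : ∀ x ∈ spectrum ℝ A, 0 ≤ x) : matAbs A = A := by
  have hsq : Aᴴ * A = cfc (fun x : ℝ => x * x) A := by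
    rw [cfc_mul _ _ A (continuousOn_spectrum _ _) (continuousOn_spectrum _ _), cfc_id' ℝ A,
      ← Matrix.star_eq_conjTranspose, hA.star_eq]
  rw [matAbs, hsq, ← cfc_comp Real.sqrt (fun x : ℝ => x * x) A hA
    (continuousOn_image_spectrum _ _ _) (continuousOn_spectrum _ _)]
  calc cfc (Real.sqrt ∘ fun x : ℝ => x * x) A
      = cfc (id : ℝ → ℝ) A := cfc_congr fun x hx => Real.sqrt_mul_self (hA_nonneg x hx)
    _ = A := cfc_id ℝ A

lemma matPow_matPow {A : Mat d} (hA : IsSelfAdjoint A)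
    (hA_nonneg : ∀ x ∈ spectrum ℝ A, 0 ≤ x) (s t : ℝ) :
    matPow (matPow A s) t = matPow A (s * t) := by
  rw [matPow, matPow, matPow, ← cfc_comp (fun x : ℝ => x ^ t) (fun x : ℝ => x ^ s) A hA
    (continuousOn_image_spectrum _ _ _) (continuousOn_spectrum _ _)]
  exact cfc_congr fun x hx => (Real.rpow_mul (hA_nonneg x hx) s t).symm

lemma matPow_mul_Ipow_mul_matPow {σ : Mat d} (hσ : σ.PosDef) (p q : ℝ) (f : Mat d) :
    matPow σ (1/(2*p)) * Ipow σ p q f * matPow σ (1/(2*p)) =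
      matPow (matAbs (matPow σ (1/(2*q)) * f * matPow σ (1/(2*q)))) (q/p) := by
  have hpos := hσ.spectrum_real_pos
  set s := 1/(2*p)
  set M := matPow (matAbs (matPow σ (1/(2*q)) * f * matPow σ (1/(2*q)))) (q/p)
  calc matPow σ s * Ipow σ p q f * matPow σ s
      = (matPow σ s * matPow σ (-s)) * M * (matPow σ (-s) * matPow σ s) := by
        rw [Ipow]; simp only [← mul_assoc]; rfl
    _ = M := by
        rw [matPow_mul_matPow hpos, matPow_mul_matPow hpos, add_neg_cancel, neg_add_cancel,
          matPow_zero hσ.isHermitian.isSelfAdjoint, one_mul, mul_one]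

theorem Ipow_comp_general (σ f : Mat d) (hσ : σ.PosDef) (p q r : ℝ) (hr : 1 ≤ r) :
    Ipow σ p r (Ipow σ r q f) = Ipow σ p q f := by
  have hB := isSelfAdjoint_matAbs (matPow σ (1/(2*q)) * f * matPow σ (1/(2*q)))
  have hB_nonneg := spectrum_matAbs_nonneg (matPow σ (1/(2*q)) * f * matPow σ (1/(2*q)))
  have hr0 : r ≠ 0 := by positivity
  rw [Ipow, matPow_mul_Ipow_mul_matPow hσ,
    matAbs_of_spectrum_nonneg (isSelfAdjoint_matPow _ _) (spectrum_matPow_nonneg hB hB_nonneg _),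
    matPow_matPow hB hB_nonneg, Ipow]
  congr 3
  field_simp

/-- composition law `I_{p,r} ∘ I_{r,q} = I_{p,q}`. -/
theorem Ipow_comp (σ f : Mat d) (hσ : σ.PosDef) (hσ1 : σ.trace = 1)
    (hf : f.IsHermitian) (p q r : ℝ) (hp : 1 ≤ p) (hq : 1 ≤ q) (hr : 1 ≤ r) :
    Ipow σ p r (Ipow σ r q f) = Ipow σ p q f :=
  Ipow_comp_general σ f hσ p q r hr
end
end

section
/- For full-rank density matrices ρ, σ, the trace norm distance is bounded by the χ²-divergence: ‖ρ − σ‖_tr² ≤ Tr((ρ−σ) σ^{-1/2} (ρ−σ) σ^{-1/2}). -/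
/-! With `S = sign(ρ - σ)`, a Hermitian contraction, `Tr |ρ - σ| = Tr (S (ρ - σ))`, which splits
symmetrically as `Tr ((σ^{1/4} S σ^{1/4}) (σ^{-1/4} (ρ - σ) σ^{-1/4}))`. Cauchy–Schwarz for the
Hilbert–Schmidt inner product bounds its square by `Tr (S σ^{1/2} S σ^{1/2}) · χ²(ρ, σ)`, and
Cauchy–Schwarz once more together with `S² ≤ 1` gives
`Tr (S σ^{1/2} S σ^{1/2}) ≤ Tr (σ^{1/2} S² σ^{1/2}) ≤ Tr σ = 1`. -/

open Matrix
open scoped ComplexOrder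

noncomputable section

variable {d : ℕ}

open scoped MatrixOrder

namespace Matrix

variable {n : Type*} [Fintype n]

theorem re_trace_mul_sq_le (A B : Matrix n n ℂ) :
    (A * B).trace.re ^ 2 ≤ (Aᴴ * A).trace.re * (Bᴴ * B).trace.re := by
  classical
  let _ := toMatrixSeminormedAddCommGroup (1 : Matrix n n ℂ) PosSemidef.one
  let _ := toMatrixInnerProductSpace (1 : Matrix n n ℂ) PosSemidef.one
  have hinner (X Y : Matrix n n ℂ) : inner ℂ X Y = (Y * Xᴴ).trace := by
    change (Y * 1 * Xᴴ).trace = _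
    rw [mul_one]
  have h := inner_mul_inner_self_le (𝕜 := ℂ) Aᴴ B
  rw [norm_inner_symm B, hinner, hinner, hinner, conjTranspose_conjTranspose, trace_mul_comm B,
    trace_mul_comm B] at h
  calc (A * B).trace.re ^ 2 ≤ ‖(A * B).trace‖ ^ 2 := by
        rw [← sq_abs]; gcongr; exact Complex.abs_re_le_norm _
    _ ≤ _ := by rw [sq]; exact h

theorem re_trace_conjTranspose_mul_self_nonneg (A : Matrix n n ℂ) : 0 ≤ (Aᴴ * A).trace.re :=
  (Complex.nonneg_iff.mp (posSemidef_conjTranspose_mul_self A).trace_nonneg).1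

theorem re_trace_mul_self_le (A : Matrix n n ℂ) : (A * A).trace.re ≤ (Aᴴ * A).trace.re := by
  have h := re_trace_mul_sq_le A A
  nlinarith [re_trace_conjTranspose_mul_self_nonneg A]

variable [DecidableEq n]

theorem IsHermitian.re_trace_mul_mul_mul_le {K B : Matrix n n ℂ} (hK : K.IsHermitian)
    (hKK : K * K ≤ 1) (hB : B.IsHermitian) : (K * B * K * B).trace.re ≤ (B * B).trace.re := by
  have hconj : B * (K * K) * B ≤ B * B := by
    simpa [star_eq_conjTranspose, hB.eq] using star_left_conjugate_le_conjugate hKK B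
  calc (K * B * K * B).trace.re = ((K * B) * (K * B)).trace.re := by simp only [mul_assoc]
    _ ≤ ((K * B)ᴴ * (K * B)).trace.re := re_trace_mul_self_le _
    _ = (B * (K * K) * B).trace.re := by
      rw [conjTranspose_mul, hK.eq, hB.eq]; simp only [mul_assoc]
    _ ≤ (B * B).trace.re :=
      (Complex.le_def.mp ((tracePositiveLinearMap n ℂ ℂ).monotone' hconj)).1

theorem cfc_mul_cfc_le_one {A : Matrix n n ℂ} {f : ℝ → ℝ}
    (hf : ∀ x ∈ spectrum ℝ A, |f x| ≤ 1) : cfc f A * cfc f A ≤ 1 := by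
  rw [← cfc_mul f f A ((Set.toFinite _).continuousOn _) ((Set.toFinite _).continuousOn _)]
  exact cfc_le_one _ A fun x hx => by nlinarith [abs_le.mp (hf x hx), abs_mul_abs_self (f x)]

end Matrix

theorem matPow_isHermitian (A : Mat d) (r : ℝ) : (matPow A r).IsHermitian :=
  cfc_predicate _ A

theorem matPow_add {σ : Mat d} (hσ : σ.PosDef) (a b : ℝ) :
    matPow σ a * matPow σ b = matPow σ (a + b) := by
  rw [matPow, matPow, matPow,
    ← cfc_mul _ _ σ ((Set.toFinite _).continuousOn _) ((Set.toFinite _).continuousOn _)]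
  exact cfc_congr fun x hx => (Real.rpow_add (hσ.isStrictlyPositive.spectrum_pos hx) a b).symm

theorem matPow_zero_s11 {σ : Mat d} (hσ : σ.IsHermitian) : matPow σ 0 = 1 := by
  simp only [matPow, Real.rpow_zero]
  exact cfc_const_one ℝ σ hσ.isSelfAdjoint

theorem matPow_one {σ : Mat d} (hσ : σ.IsHermitian) : matPow σ 1 = σ := by
  simp only [matPow, Real.rpow_one]
  exact cfc_id' ℝ σ hσ.isSelfAdjoint

theorem trace_conj_matPow {σ : Mat d} (hσ : σ.PosDef) (r : ℝ) (X : Mat d) :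
    ((matPow σ r * X * matPow σ r)ᴴ * (matPow σ r * X * matPow σ r)).trace =
      (Xᴴ * matPow σ (r + r) * X * matPow σ (r + r)).trace := by
  rw [← matPow_add hσ, conjTranspose_mul, conjTranspose_mul, (matPow_isHermitian σ r).eq]
  simp only [mul_assoc]
  rw [trace_mul_comm (matPow σ r)]
  simp only [mul_assoc]

theorem re_trace_conjTranspose_mul_matPow_nonneg {σ : Mat d} (hσ : σ.PosDef) (a : ℝ)
    (A : Mat d) : 0 ≤ (Aᴴ * matPow σ a * A * matPow σ a).trace.re := by
  rw [← add_halves a, ← trace_conj_matPow hσ]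
  exact re_trace_conjTranspose_mul_self_nonneg _

theorem re_trace_mul_sq_le_matPow {σ : Mat d} (hσ : σ.PosDef) (a : ℝ) (K A : Mat d) :
    (K * A).trace.re ^ 2 ≤ (Kᴴ * matPow σ a * K * matPow σ a).trace.re *
      (Aᴴ * matPow σ (-a) * A * matPow σ (-a)).trace.re := by
  set Q := matPow σ (a / 2)
  set R := matPow σ (-a / 2)
  have hQR : Q * R = 1 := by
    rw [matPow_add hσ, show a / 2 + -a / 2 = 0 by ring, matPow_zero_s11 hσ.isHermitian]
  have hRQ : R * Q = 1 := by
    rw [matPow_add hσ, show -a / 2 + a / 2 = 0 by ring, matPow_zero_s11 hσ.isHermitian]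
  have hsplit : (K * A).trace = ((Q * K * Q) * (R * A * R)).trace := by
    calc (K * A).trace = (R * Q * (K * A)).trace := by rw [hRQ, one_mul]
      _ = (Q * K * (Q * R) * A * R).trace := by
        rw [mul_assoc, trace_mul_comm, hQR, mul_one]; simp only [mul_assoc]
      _ = _ := by simp only [mul_assoc]
  have h := re_trace_mul_sq_le (Q * K * Q) (R * A * R)
  rwa [← hsplit, trace_conj_matPow hσ, trace_conj_matPow hσ, add_halves, add_halves] at h

theorem matAbs_eq_cfc_sign_mul {A : Mat d} (hA : A.IsHermitian) :
    matAbs A = cfc Real.sign A * A := by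
  have hsq : Aᴴ * A = cfc (fun x : ℝ => x * x) A := by
    rw [cfc_mul _ _ A, cfc_id' ℝ A hA.isSelfAdjoint, hA.eq]
  have habs (x : ℝ) : Real.sqrt (x * x) = Real.sign x * x := by
    rw [Real.sqrt_mul_self_eq_abs]
    rcases lt_trichotomy x 0 with h | rfl | h
    · rw [abs_of_neg h, Real.sign_of_neg h, neg_one_mul]
    · simp
    · rw [abs_of_pos h, Real.sign_of_pos h, one_mul]
  rw [matAbs, hsq, ← cfc_comp Real.sqrt (fun x : ℝ => x * x) A hA.isSelfAdjoint
    Real.continuous_sqrt.continuousOn, Function.comp_def]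
  simp only [habs]
  rw [cfc_mul _ _ A ((Set.toFinite _).continuousOn _), cfc_id' ℝ A hA.isSelfAdjoint]

theorem Real.abs_sign_le_one (x : ℝ) : |Real.sign x| ≤ 1 := by
  rcases Real.sign_apply_eq x with h | h | h <;> simp [h]

theorem trace_norm_sq_le_chi2_general (σ ρ : Mat d)
    (hσ : σ.PosDef) (hσ1 : σ.trace = 1) (hρ : ρ.PosDef) :
    ((matAbs (ρ - σ)).trace.re) ^ 2 ≤
      ((ρ - σ) * matPow σ (-(1/2)) * (ρ - σ) * matPow σ (-(1/2))).trace.re := by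
  have hΔ : (ρ - σ).IsHermitian := hρ.isHermitian.sub hσ.isHermitian
  set S := cfc Real.sign (ρ - σ)
  have hS : S.IsHermitian := cfc_predicate _ _
  have hSσ : (Sᴴ * matPow σ (1 / 2) * S * matPow σ (1 / 2)).trace.re ≤ 1 := by
    rw [hS.eq]
    calc _ ≤ (matPow σ (1 / 2) * matPow σ (1 / 2)).trace.re :=
          hS.re_trace_mul_mul_mul_le (cfc_mul_cfc_le_one fun x _ => Real.abs_sign_le_one x)
            (matPow_isHermitian σ _)
      _ = 1 := by rw [matPow_add hσ, add_halves, matPow_one hσ.isHermitian, hσ1, Complex.one_re]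
  calc (matAbs (ρ - σ)).trace.re ^ 2 = (S * (ρ - σ)).trace.re ^ 2 := by
        rw [matAbs_eq_cfc_sign_mul hΔ]
    _ ≤ (Sᴴ * matPow σ (1 / 2) * S * matPow σ (1 / 2)).trace.re *
          ((ρ - σ)ᴴ * matPow σ (-(1 / 2)) * (ρ - σ) * matPow σ (-(1 / 2))).trace.re :=
        re_trace_mul_sq_le_matPow hσ _ _ _
    _ ≤ ((ρ - σ)ᴴ * matPow σ (-(1 / 2)) * (ρ - σ) * matPow σ (-(1 / 2))).trace.re :=
        mul_le_of_le_one_left (re_trace_conjTranspose_mul_matPow_nonneg hσ _ _) hSσ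
    _ = _ := by rw [hΔ.eq]

/-- `‖ρ − σ‖_tr² ≤ χ²(ρ,σ) = Tr((ρ−σ)σ^{-1/2}(ρ−σ)σ^{-1/2})`. -/
theorem trace_norm_sq_le_chi2 (σ ρ : Mat d)
    (hσ : σ.PosDef) (hσ1 : σ.trace = 1) (hρ : ρ.PosDef) (hρ1 : ρ.trace = 1) :
    ((matAbs (ρ - σ)).trace.re) ^ 2 ≤
      ((ρ - σ) * matPow σ (-(1/2)) * (ρ - σ) * matPow σ (-(1/2))).trace.re :=
  trace_norm_sq_le_chi2_general σ ρ hσ hσ1 hρ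
end
end

section
/- Let L be the generator of the qubit depolarizing semigroup L(f) = γ(Tr(f)·𝟙/2 − f) on 2×2 matrices. Then its LS_2 constant equals γ, i.e. γ·Ent_2(f) ≤ E_2(f) for all positive definite 2×2 Hermitian f, where E_2(f) = −⟨f, L(f)⟩_σ with σ = 𝟙/2, and γ is the largest such constant (equality is approached). Equivalently, the infimum of E_2(f)/Ent_2(f) over positive definite f with Ent_2(f) ≠ 0 equals γ. -/
open Matrix
open scoped ComplexOrder

noncomputable section

variable {d : ℕ}

/-- The `L_2` relative entropy. -/
def Ent2 (σ f : Mat d) : ℝ :=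
  (((matPow σ (1/4) * f * matPow σ (1/4)) ^ 2 *
      matLog (matPow σ (1/4) * f * matPow σ (1/4))).trace.re)
  - (1/2) * (((matPow σ (1/4) * f * matPow σ (1/4)) ^ 2 * matLog σ).trace.re)
  - (1/2) * (((matPow σ (1/4) * f * matPow σ (1/4)) ^ 2).trace.re) *
      Real.log (((matPow σ (1/4) * f * matPow σ (1/4)) ^ 2).trace.re)

/-- The qubit depolarizing Liouvillian `L(f) = γ(Tr(f)·𝟙/2 − f)`. -/
def depolL (γ : ℝ) (f : Mat 2) : Mat 2 :=
  (γ : ℂ) • ((f.trace / 2) • (1 : Mat 2) - f)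

/-- The maximally mixed qubit state `σ = 𝟙/2`. -/
def sigma2 : Mat 2 := ((2 : ℂ))⁻¹ • (1 : Mat 2)

/-- The `L_2` Dirichlet form `E_2(f) = −⟨f, L(f)⟩_σ` for the qubit depolarizing semigroup. -/
def dirichlet2 (γ : ℝ) (f : Mat 2) : ℝ :=
  -((matPow sigma2 (1/2) * f * matPow sigma2 (1/2) * depolL γ f).trace.re)

/-! For `σ = 𝟙/2` both sides depend only on the eigenvalues `a, b` of `f`:
`E₂(f) = γ (a - b)² / 4` and `Ent₂(f) = pairEnt (a²) (b²) / 4`. The inequality is therefore Gross'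
two-point log-Sobolev inequality `pairEnt (a²) (b²) ≤ (a - b)²`, which by homogeneity is a
one-variable calculus fact at `b = 1`. For optimality take eigenvalues `√(1 ± u)`: then
`(1 - u²) E₂ ≤ γ u² / 4` and `(1 - u²) Ent₂ ≥ u² (1 - 2u²) / 4`, so `E₂ / Ent₂ → γ` as `u → 0`. -/

open Real Filter Topology

/-- Twice the entropy of the density `(x, y)` with respect to the uniform probability on two
points. -/
def pairEnt (x y : ℝ) : ℝ := x * log x + y * log y - (x + y) * log ((x + y) / 2)

lemma pairEnt_nonneg {x y : ℝ} (hx : 0 ≤ x) (hy : 0 ≤ y) : 0 ≤ pairEnt x y := by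
  have h := convexOn_mul_log.2 (Set.mem_Ici.2 hx) (Set.mem_Ici.2 hy)
    (by norm_num : (0 : ℝ) ≤ 1 / 2) (by norm_num : (0 : ℝ) ≤ 1 / 2) (by norm_num)
  simp only [smul_eq_mul] at h
  rw [show 1 / 2 * x + 1 / 2 * y = (x + y) / 2 by ring] at h
  unfold pairEnt
  linarith

lemma pairEnt_mul {c x y : ℝ} (hc : 0 < c) (hx : 0 < x) (hy : 0 < y) :
    pairEnt (c * x) (c * y) = c * pairEnt x y := by
  unfold pairEnt
  rw [show (c * x + c * y) / 2 = c * ((x + y) / 2) by ring, log_mul hc.ne' hx.ne',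
    log_mul hc.ne' hy.ne', log_mul hc.ne' (by positivity)]
  ring

lemma le_of_hasDerivAt_sign_change {f f' : ℝ → ℝ} {a c x : ℝ} (hc : a < c) (hx : a < x)
    (hf : ∀ y, a < y → HasDerivAt f (f' y) y) (hle : ∀ y, a < y → y < c → f' y ≤ 0)
    (hge : ∀ y, c < y → 0 ≤ f' y) : f c ≤ f x := by
  rcases le_total x c with hxc | hcx
  · refine antitoneOn_of_hasDerivWithinAt_nonpos (f' := f') (convex_Ioc a c) ?_ ?_ ?_
      ⟨hx, hxc⟩ ⟨hc, le_rfl⟩ hxc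
    · exact fun y hy => (hf y hy.1).continuousAt.continuousWithinAt
    · rw [interior_Ioc]; exact fun y hy => (hf y hy.1).hasDerivWithinAt
    · rw [interior_Ioc]; exact fun y hy => hle y hy.1 hy.2
  · refine monotoneOn_of_hasDerivWithinAt_nonneg (f' := f') (convex_Ici c) ?_ ?_ ?_
      Set.self_mem_Ici hcx hcx
    · exact fun y hy => (hf y (hc.trans_le hy)).continuousAt.continuousWithinAt
    · rw [interior_Ici]; exact fun y hy => (hf y (hc.trans hy)).hasDerivWithinAt
    · rw [interior_Ici]; exact fun y hy => hge y hy

lemma hasDerivAt_one_sub_inv_sub_log_add_log {t : ℝ} (ht : 0 < t) :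
    HasDerivAt (fun t => 1 - t⁻¹ - log (t ^ 2) + log ((t ^ 2 + 1) / 2))
      ((t - 1) ^ 2 / (t ^ 2 * (t ^ 2 + 1))) t := by
  have h := (((hasDerivAt_const t (1 : ℝ)).sub (hasDerivAt_inv ht.ne')).sub
    ((hasDerivAt_pow 2 t).log (by positivity))).add
    ((((hasDerivAt_pow 2 t).add_const 1).div_const 2).log (by positivity))
  refine h.congr_deriv ?_
  field_simp
  ring

lemma hasDerivAt_sub_one_sq_sub_pairEnt {t : ℝ} (ht : 0 < t) :
    HasDerivAt (fun t => (t - 1) ^ 2 - pairEnt (t ^ 2) 1)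
      (2 * t * (1 - t⁻¹ - log (t ^ 2) + log ((t ^ 2 + 1) / 2))) t := by
  unfold pairEnt
  have h := (((hasDerivAt_id' t).sub_const 1).pow 2).sub
    ((((hasDerivAt_pow 2 t).mul ((hasDerivAt_pow 2 t).log (by positivity))).add
      (hasDerivAt_const t (1 * log 1))).sub
      (((hasDerivAt_pow 2 t).add_const 1).mul
        ((((hasDerivAt_pow 2 t).add_const 1).div_const 2).log (by positivity))))
  refine h.congr_deriv ?_
  field_simp
  ring

/-- The derivative of `(t - 1) ^ 2 - pairEnt (t ^ 2) 1` is `2 t g(t)` with `g` increasing and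
`g 1 = 0`. -/
lemma pairEnt_sq_one_le {t : ℝ} (ht : 0 < t) : pairEnt (t ^ 2) 1 ≤ (t - 1) ^ 2 := by
  have hslope : MonotoneOn (fun t => 1 - t⁻¹ - log (t ^ 2) + log ((t ^ 2 + 1) / 2))
      (Set.Ioi 0) := by
    have hderiv := fun s (hs : 0 < s) => hasDerivAt_one_sub_inv_sub_log_add_log hs
    refine monotoneOn_of_hasDerivWithinAt_nonneg
      (f' := fun s => (s - 1) ^ 2 / (s ^ 2 * (s ^ 2 + 1))) (convex_Ioi 0)
      (fun s hs => (hderiv s hs).continuousAt.continuousWithinAt) ?_ ?_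
    · rw [interior_Ioi]; exact fun s hs => (hderiv s hs).hasDerivWithinAt
    · rw [interior_Ioi]; exact fun s _ => by positivity
  have hslope_one : 1 - (1 : ℝ)⁻¹ - log (1 ^ 2) + log ((1 ^ 2 + 1) / 2) = 0 := by norm_num
  have h := le_of_hasDerivAt_sign_change (f' := fun t => 2 * t * (1 - t⁻¹ - log (t ^ 2) +
      log ((t ^ 2 + 1) / 2))) zero_lt_one ht (fun s hs => hasDerivAt_sub_one_sq_sub_pairEnt hs)
    (fun s hs hs1 => mul_nonpos_of_nonneg_of_nonpos (by positivity)
      (hslope_one ▸ hslope hs (Set.mem_Ioi.2 one_pos) hs1.le))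
    (fun s hs => mul_nonneg (by positivity)
      (hslope_one ▸ hslope (Set.mem_Ioi.2 one_pos) (Set.mem_Ioi.2 (one_pos.trans hs)) hs.le))
  norm_num [pairEnt] at h ⊢
  linarith

lemma pairEnt_sq_le {a b : ℝ} (ha : 0 < a) (hb : 0 < b) :
    pairEnt (a ^ 2) (b ^ 2) ≤ (a - b) ^ 2 := by
  have h := pairEnt_sq_one_le (div_pos ha hb)
  have hscale := pairEnt_mul (pow_pos hb 2) (pow_pos (div_pos ha hb) 2) one_pos
  rw [mul_one, show b ^ 2 * (a / b) ^ 2 = a ^ 2 by field_simp] at hscale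
  rw [hscale, show (a - b) ^ 2 = b ^ 2 * (a / b - 1) ^ 2 by field_simp]
  exact mul_le_mul_of_nonneg_left h (by positivity)

lemma two_mul_le_log_sub_log {u : ℝ} (hu : 0 ≤ u) (hu1 : u < 1) :
    2 * u ≤ log (1 + u) - log (1 - u) := by
  have h := le_hasSum (hasSum_log_sub_log_of_abs_lt_one (abs_lt.2 ⟨by linarith, hu1⟩)) 0
    (fun k _ => by positivity)
  simpa using h

lemma sq_sub_two_mul_pow_four_le_pairEnt {u : ℝ} (hu : 0 ≤ u) (hu1 : u < 1) :
    u ^ 2 - 2 * u ^ 4 ≤ (1 - u ^ 2) * pairEnt (1 + u) (1 - u) := by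
  have hodd := two_mul_le_log_sub_log hu hu1
  have h1u2 : 0 < 1 - u ^ 2 := by nlinarith
  have heven := one_sub_inv_le_log_of_pos h1u2
  rw [show 1 - u ^ 2 = (1 + u) * (1 - u) by ring, log_mul (by linarith) (by linarith),
    ← show 1 - u ^ 2 = (1 + u) * (1 - u) by ring] at heven
  have hsplit : pairEnt (1 + u) (1 - u) =
      u * (log (1 + u) - log (1 - u)) + (log (1 + u) + log (1 - u)) := by
    simp only [pairEnt, show (1 + u + (1 - u)) / 2 = 1 by ring, log_one]
    ring
  rw [hsplit]
  have hinv : (1 - u ^ 2) * (1 - (1 - u ^ 2)⁻¹) = - u ^ 2 := by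
    rw [mul_sub, mul_inv_cancel₀ h1u2.ne']
    ring
  nlinarith [mul_le_mul_of_nonneg_left hodd (mul_nonneg hu h1u2.le),
    mul_le_mul_of_nonneg_left heven h1u2.le]

lemma one_sub_sq_mul_sqrt_sub_sqrt_sq_le {u : ℝ} (hu : |u| ≤ 1) :
    (1 - u ^ 2) * (√(1 + u) - √(1 - u)) ^ 2 ≤ u ^ 2 := by
  obtain ⟨hu₁, hu₂⟩ := abs_le.1 hu
  set s := √(1 + u) * √(1 - u) with hs_def
  have hs : s ^ 2 = 1 - u ^ 2 := by
    rw [hs_def, mul_pow, sq_sqrt (by linarith), sq_sqrt (by linarith)]; ring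
  have hs0 : 0 ≤ s := by positivity
  have hdiff : (√(1 + u) - √(1 - u)) ^ 2 = 2 - 2 * s := by
    rw [sub_sq, sq_sqrt (by linarith), sq_sqrt (by linarith)]; ring
  rw [hdiff, ← hs]
  nlinarith [mul_nonneg (sq_nonneg (1 - s)) (by linarith : 0 ≤ 2 * s + 1)]

lemma Matrix.IsHermitian.trace_cfc {A : Mat d} (hA : A.IsHermitian) (φ : ℝ → ℝ) :
    (cfc φ A).trace = ∑ i, (φ (hA.eigenvalues i) : ℂ) := by
  rw [hA.cfc_eq, IsHermitian.cfc, Unitary.conjStarAlgAut_apply, trace_mul_cycle,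
    Unitary.star_mul_self_of_mem (SetLike.coe_mem _), one_mul]
  simp [trace_diagonal]

lemma matPow_algebraMap (s r : ℝ) :
    matPow (algebraMap ℝ (Mat d) s) r = algebraMap ℝ (Mat d) (s ^ r) :=
  cfc_algebraMap _ _

lemma matLog_algebraMap (s : ℝ) :
    matLog (algebraMap ℝ (Mat d) s) = algebraMap ℝ (Mat d) (log s) :=
  cfc_algebraMap _ _

lemma matPow_algebraMap_conj (s r : ℝ) (f : Mat d) :
    matPow (algebraMap ℝ (Mat d) s) r * f * matPow (algebraMap ℝ (Mat d) s) r =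
      (s ^ r * s ^ r) • f := by
  rw [matPow_algebraMap, ← Algebra.smul_def, smul_mul_assoc, ← Algebra.commutes,
    ← Algebra.smul_def, smul_smul]

lemma sq_mul_log_mul {s c x : ℝ} (hc : 0 < c) (hcc : c * c = s) :
    (c * x) ^ 2 * log (c * x) = s / 2 * (x ^ 2 * log (x ^ 2) + x ^ 2 * log s) := by
  rcases eq_or_ne x 0 with rfl | hx
  · simp
  rw [log_mul hc.ne' hx, ← hcc, log_mul hc.ne' hc.ne', log_pow]
  push_cast
  ring

lemma Ent2_algebraMap {s : ℝ} (hs : 0 < s) {f : Mat d} (hf : f.IsHermitian) :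
    Ent2 (algebraMap ℝ (Mat d) s) f =
      s / 2 * (∑ i, hf.eigenvalues i ^ 2 * log (hf.eigenvalues i ^ 2) -
        (∑ i, hf.eigenvalues i ^ 2) * log (s * ∑ i, hf.eigenvalues i ^ 2)) := by
  set c := s ^ (1 / 4 : ℝ) * s ^ (1 / 4 : ℝ) with hc_def
  have hc : 0 < c := by positivity
  have hcc : c * c = s := by
    rw [hc_def, ← rpow_add hs, ← rpow_add hs]; norm_num
  have hc2 : c ^ 2 = s := by rw [sq, hcc]
  have hsq : (c • f) ^ 2 = cfc (fun x => (c * x) ^ 2) f := by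
    rw [← cfc_const_mul_id c f, ← cfc_pow (fun x => c * x) 2 f]
  have hlog : matLog (c • f) = cfc (fun x => log (c * x)) f :=
    (cfc_comp_const_mul c log f ((f.finite_real_spectrum.image _).continuousOn _)).symm
  have hprod : (c • f) ^ 2 * matLog (c • f) = cfc (fun x => (c * x) ^ 2 * log (c * x)) f := by
    rw [hsq, hlog, ← cfc_mul _ _ f (f.finite_real_spectrum.continuousOn _)
      (f.finite_real_spectrum.continuousOn _)]
  have htr : ∀ φ : ℝ → ℝ, (cfc φ f).trace.re = ∑ i, φ (hf.eigenvalues i) := fun φ => by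
    simp [hf.trace_cfc]
  unfold Ent2
  rw [matPow_algebraMap_conj, ← hc_def, matLog_algebraMap, ← Algebra.commutes,
    ← Algebra.smul_def, hprod, Matrix.trace_smul, hsq, htr, htr, Complex.smul_re, smul_eq_mul, htr,
    Finset.sum_congr rfl fun i _ => sq_mul_log_mul hc hcc]
  simp only [mul_pow, hc2, ← Finset.mul_sum, Finset.sum_add_distrib, ← Finset.sum_mul]
  ring

lemma sigma2_eq_algebraMap : sigma2 = algebraMap ℝ (Mat 2) 2⁻¹ := by
  rw [Algebra.algebraMap_eq_smul_one]
  ext i j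
  simp [sigma2, Matrix.smul_apply]

/-- `hab` says that the eigenvalues of `f` are `a` and `b`, in some order. -/
lemma Ent2_sigma2 {f : Mat 2} (hf : f.IsHermitian) {a b : ℝ}
    (hab : ∀ φ : ℝ → ℝ, ∑ i, φ (hf.eigenvalues i) = φ a + φ b) :
    Ent2 sigma2 f = pairEnt (a ^ 2) (b ^ 2) / 4 := by
  rw [sigma2_eq_algebraMap, Ent2_algebraMap (by norm_num) hf, hab (fun x => x ^ 2 * log (x ^ 2)),
    hab (· ^ 2), pairEnt, inv_mul_eq_div]
  ring

lemma dirichlet2_eq {f : Mat 2} (hf : f.IsHermitian) {a b : ℝ}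
    (hab : ∀ φ : ℝ → ℝ, ∑ i, φ (hf.eigenvalues i) = φ a + φ b) (γ : ℝ) :
    dirichlet2 γ f = γ / 4 * (a - b) ^ 2 := by
  have htr : f.trace = ((a + b : ℝ) : ℂ) := by
    rw [hf.trace_eq_sum_eigenvalues]
    simpa using congrArg (fun x : ℝ => (x : ℂ)) (hab fun x => x)
  have htr_sq : (f ^ 2).trace = ((a ^ 2 + b ^ 2 : ℝ) : ℂ) := by
    rw [← cfc_pow_id (R := ℝ) f 2, hf.trace_cfc]
    simpa using congrArg (fun x : ℝ => (x : ℂ)) (hab fun x => x ^ (2 : ℕ))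
  have hsqrt : (2⁻¹ : ℝ) ^ (1 / 2 : ℝ) * (2⁻¹ : ℝ) ^ (1 / 2 : ℝ) = 2⁻¹ := by
    rw [← rpow_add (by norm_num)]; norm_num
  rw [dirichlet2, sigma2_eq_algebraMap, matPow_algebraMap_conj, hsqrt, depolL, smul_mul_assoc,
    mul_smul_comm, mul_sub, mul_smul_comm, mul_one, ← sq, trace_smul, trace_smul, trace_sub,
    trace_smul, htr, htr_sq]
  have hquad : (((a + b : ℝ) : ℂ) / 2) • ((a + b : ℝ) : ℂ) - ((a ^ 2 + b ^ 2 : ℝ) : ℂ) =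
      (((a + b) ^ 2 / 2 - (a ^ 2 + b ^ 2) : ℝ) : ℂ) := by
    push_cast; ring
  rw [hquad, Complex.real_smul, smul_eq_mul, ← Complex.ofReal_mul, ← Complex.ofReal_mul,
    Complex.ofReal_re]
  ring

lemma Matrix.IsHermitian.sum_eigenvalues_diagonal {n : Type*} [Fintype n] [DecidableEq n]
    (v : n → ℝ) (hv : (diagonal fun i => (v i : ℂ)).IsHermitian) (φ : ℝ → ℝ) :
    ∑ i, φ (hv.eigenvalues i) = ∑ i, φ (v i) := by
  have hroots := hv.roots_charpoly_eq_eigenvalues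
  rw [charpoly_diagonal, Polynomial.roots_prod _ _ (by
    simp [Finset.prod_ne_zero_iff, Polynomial.X_sub_C_ne_zero])] at hroots
  simp only [Polynomial.roots_X_sub_C, Multiset.bind_singleton] at hroots
  have hmap := congrArg (Multiset.map fun z : ℂ => φ z.re) hroots
  simp only [Multiset.map_map, Function.comp_def] at hmap
  rw [Finset.sum_eq_multiset_sum, Finset.sum_eq_multiset_sum]
  congr 1
  simpa using hmap.symm

/-- The squares of its eigenvalues `√(1 ± u)` sum to `2`, so the normalisation term of `Ent₂`
vanishes. -/
def testState (u : ℝ) : Mat 2 :=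
  diagonal fun i => ((![√(1 + u), √(1 - u)] i : ℝ) : ℂ)

lemma testState_isHermitian (u : ℝ) : (testState u).IsHermitian :=
  isHermitian_diagonal_iff.2 fun _ => Complex.conj_ofReal _

lemma testState_posDef {u : ℝ} (hu : |u| < 1) : (testState u).PosDef := by
  obtain ⟨hu₁, hu₂⟩ := abs_lt.1 hu
  rw [testState, posDef_diagonal_iff]
  intro i
  fin_cases i <;> simp [Complex.zero_lt_real, sqrt_pos] <;> linarith

lemma sum_eigenvalues_testState (u : ℝ) (φ : ℝ → ℝ) :
    ∑ i, φ ((testState_isHermitian u).eigenvalues i) = φ √(1 + u) + φ √(1 - u) :=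
  (IsHermitian.sum_eigenvalues_diagonal _ (testState_isHermitian u) φ).trans (Fin.sum_univ_two _)

lemma Ent2_testState {u : ℝ} (hu : |u| ≤ 1) :
    Ent2 sigma2 (testState u) = pairEnt (1 + u) (1 - u) / 4 := by
  obtain ⟨hu₁, hu₂⟩ := abs_le.1 hu
  rw [Ent2_sigma2 _ (sum_eigenvalues_testState u), sq_sqrt (by linarith), sq_sqrt (by linarith)]

lemma dirichlet2_testState (γ u : ℝ) :
    dirichlet2 γ (testState u) = γ / 4 * (√(1 + u) - √(1 - u)) ^ 2 :=
  dirichlet2_eq _ (sum_eigenvalues_testState u) γ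

lemma Ent2_testState_pos {u : ℝ} (hu : 0 < u) (hu2 : 2 * u ^ 2 < 1) :
    0 < Ent2 sigma2 (testState u) := by
  have hu1 : |u| ≤ 1 := by rw [abs_of_pos hu]; nlinarith
  have h := sq_sub_two_mul_pow_four_le_pairEnt hu.le (by nlinarith)
  rw [Ent2_testState hu1]
  have : 0 < u ^ 2 - 2 * u ^ 4 := by nlinarith [pow_pos hu 2]
  have : 0 < pairEnt (1 + u) (1 - u) := pos_of_mul_pos_right (this.trans_le h) (by nlinarith)
  positivity

lemma dirichlet2_div_Ent2_testState_le {γ u : ℝ} (hγ : 0 ≤ γ) (hu : 0 < u)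
    (hu2 : 2 * u ^ 2 < 1) :
    dirichlet2 γ (testState u) / Ent2 sigma2 (testState u) ≤ γ / (1 - 2 * u ^ 2) := by
  have hu1 : |u| ≤ 1 := by rw [abs_of_pos hu]; nlinarith
  have hent := sq_sub_two_mul_pow_four_le_pairEnt hu.le (by nlinarith)
  have hdir := one_sub_sq_mul_sqrt_sub_sqrt_sq_le hu1
  rw [div_le_div_iff₀ (Ent2_testState_pos hu hu2) (by linarith), dirichlet2_testState,
    Ent2_testState hu1]
  have h1u2 : 0 < 1 - u ^ 2 := by nlinarith
  refine le_of_mul_le_mul_left ?_ h1u2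
  have h12u2 : 0 ≤ 1 - 2 * u ^ 2 := by linarith
  nlinarith [mul_le_mul_of_nonneg_left hdir (mul_nonneg hγ h12u2),
    mul_le_mul_of_nonneg_left hent hγ]

lemma Ent2_sigma2_nonneg {f : Mat 2} (hf : f.IsHermitian) : 0 ≤ Ent2 sigma2 f := by
  rw [Ent2_sigma2 hf fun φ => Fin.sum_univ_two _]
  exact div_nonneg (pairEnt_nonneg (sq_nonneg _) (sq_nonneg _)) zero_le_four

lemma mul_Ent2_sigma2_le_dirichlet2 {γ : ℝ} (hγ : 0 ≤ γ) {f : Mat 2} (hf : f.PosDef) :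
    γ * Ent2 sigma2 f ≤ dirichlet2 γ f := by
  have hab := fun φ : ℝ → ℝ => Fin.sum_univ_two (fun i => φ (hf.isHermitian.eigenvalues i))
  rw [Ent2_sigma2 hf.isHermitian hab, dirichlet2_eq hf.isHermitian hab]
  have h := pairEnt_sq_le (hf.eigenvalues_pos 0) (hf.eigenvalues_pos 1)
  nlinarith [mul_le_mul_of_nonneg_left h hγ]

/-- the LS₂ constant of the qubit depolarizing semigroup equals `γ`:
`γ` is the largest constant `α` with `α Ent₂(f) ≤ E₂(f)` for all positive definite `f`,
and `γ` is the infimum of `E₂(f)/Ent₂(f)` over positive definite `f` with `Ent₂(f) ≠ 0`. -/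
theorem qubit_depolarizing_LS2 (γ : ℝ) (hγ : 0 < γ) :
    IsGreatest {α : ℝ | ∀ f : Mat 2, f.PosDef → α * Ent2 sigma2 f ≤ dirichlet2 γ f} γ ∧
    IsGLB {r : ℝ | ∃ f : Mat 2, f.PosDef ∧ Ent2 sigma2 f ≠ 0 ∧
           r = dirichlet2 γ f / Ent2 sigma2 f} γ := by
  set S := {r : ℝ | ∃ f : Mat 2, f.PosDef ∧ Ent2 sigma2 f ≠ 0 ∧
    r = dirichlet2 γ f / Ent2 sigma2 f}
  have hLS : ∀ f : Mat 2, f.PosDef → γ * Ent2 sigma2 f ≤ dirichlet2 γ f :=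
    fun f hf => mul_Ent2_sigma2_le_dirichlet2 hγ.le hf
  have hlower : ∀ α : ℝ, (∀ f : Mat 2, f.PosDef → α * Ent2 sigma2 f ≤ dirichlet2 γ f) →
      α ∈ lowerBounds S := by
    rintro α hα _ ⟨f, hf, hne, rfl⟩
    exact (le_div_iff₀ ((Ent2_sigma2_nonneg hf.isHermitian).lt_of_ne hne.symm)).2 (hα f hf)
  have hgreatest : ∀ β ∈ lowerBounds S, β ≤ γ := by
    intro β hβ
    have hlim : Tendsto (fun u : ℝ => γ / (1 - 2 * u ^ 2)) (𝓝[>] 0) (𝓝 γ) := by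
      have : ContinuousAt (fun u : ℝ => γ / (1 - 2 * u ^ 2)) 0 :=
        continuousAt_const.div (by fun_prop) (by norm_num)
      simpa using this.tendsto.mono_left nhdsWithin_le_nhds
    refine ge_of_tendsto hlim ?_
    filter_upwards [Ioo_mem_nhdsGT (by norm_num : (0 : ℝ) < 1 / 2)] with u ⟨hu, hu'⟩
    have hu2 : 2 * u ^ 2 < 1 := by nlinarith
    exact (hβ ⟨testState u, testState_posDef (by rw [abs_of_pos hu]; linarith),
      (Ent2_testState_pos hu hu2).ne', rfl⟩).trans (dirichlet2_div_Ent2_testState_le hγ.le hu hu2)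
  exact ⟨⟨hLS, fun α hα => hgreatest α (hlower α hα)⟩, hlower γ hLS, hgreatest⟩
end
end

section
/- Let T be a primitive reversible quantum channel on d×d matrices with full-rank stationary state σ, such that T is lazy (T = (id + S)/2 for some channel S, so the similarity transform Γ_σ^{1/2} ∘ T ∘ Γ_σ^{−1/2} is Hermitian with eigenvalues β_i ∈ [0,1]). Let T_t = e^{t(T−id)} be the continuous-time semigroup generated by L = T − id. Then for every density matrix ρ and positive integer n, χ²(T*ⁿ(ρ), σ) ≤ χ²(T*_n(ρ), σ), i.e. the discrete iterates converge at least as fast (in χ²) as the continuous semigroup evaluated at integer times. -/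
/-!
Conjugating `T*` by `σ^{-1/4}` on both sides gives an operator `Φ` on matrices with the
Hilbert–Schmidt inner product; reversibility makes `Φ` self-adjoint, and
`χ²(X, σ) = ‖σ^{-1/4} (X - σ) σ^{-1/4}‖²`. If `T* B = μ B`, reversibility turns
`σ^{-1/2} Bᴴ σ^{-1/2}` into an eigenvector of the unital Heisenberg map of `S` with eigenvalue
`2μ - 1`; testing the Kadison–Schwarz inequality against the invariant state `σ` gives
`|2μ - 1| ≤ 1`, so the spectrum of `Φ` is nonnegative. In an eigenbasis of `Φ`, `T*ⁿ` scales the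
coordinate of an eigenvalue `β` by `βⁿ` and the semigroup at time `n` by `e^{n(β - 1)}`, and
`0 ≤ β ≤ e^{β - 1}`.
-/
open Matrix
open scoped ComplexOrder

noncomputable section

variable {d : ℕ}

/-- The χ²-divergence `χ²(ρ,σ) = Tr((ρ−σ)σ^{-1/2}(ρ−σ)σ^{-1/2})`. -/
def chi2 (ρ σ : Mat d) : ℝ :=
  ((ρ - σ) * matPow σ (-(1/2)) * (ρ - σ) * matPow σ (-(1/2))).trace.re

/-- The continuous-time semigroup `e^{t(T*−id)} = e^{−t} Σ_k (t^k/k!) (T*)^k`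
generated by `L = T − id`, in the Schrödinger picture. -/
def contT (Tstar : Module.End ℂ (Mat d)) (t : ℝ) (ρ : Mat d) : Mat d :=
  ∑' k : ℕ, ((Real.exp (-t) * t ^ k / (Nat.factorial k) : ℝ) : ℂ) • ((Tstar ^ k) ρ)

open Module.End
open scoped InnerProductSpace

def poissonWeight (t : ℝ) (k : ℕ) : ℝ := Real.exp (-t) * t ^ k / k.factorial

theorem hasSum_poissonWeight_mul_pow (t μ : ℝ) :
    HasSum (fun k => poissonWeight t k * μ ^ k) (Real.exp (t * (μ - 1))) := by
  have h := (NormedSpace.expSeries_div_hasSum_exp (t * μ)).mul_left (Real.exp (-t))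
  rw [← Real.exp_eq_exp_ℝ, ← Real.exp_add] at h
  have hw : (fun k => poissonWeight t k * μ ^ k)
      = fun k => Real.exp (-t) * ((t * μ) ^ k / k.factorial) := by
    ext k; rw [poissonWeight, mul_pow]; ring
  rwa [hw, show t * (μ - 1) = -t + t * μ by ring]

section PoissonSemigroup

variable {E : Type*} [NormedAddCommGroup E] [InnerProductSpace ℂ E] [FiniteDimensional ℂ E]
  {T : E →ₗ[ℂ] E} {N : ℕ}

theorem LinearMap.IsSymmetric.eigenvectorBasis_repr_pow_apply (hT : T.IsSymmetric)
    (hN : Module.finrank ℂ E = N) (k : ℕ) (v : E) (i : Fin N) :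
    (hT.eigenvectorBasis hN).repr ((T ^ k) v) i
      = (hT.eigenvalues hN i : ℂ) ^ k * (hT.eigenvectorBasis hN).repr v i := by
  induction k with
  | zero => simp
  | succ k ih =>
    rw [pow_succ', Module.End.mul_apply, hT.eigenvectorBasis_apply_self_apply, ih, pow_succ',
      mul_assoc]
    rfl

theorem LinearMap.IsSymmetric.hasSum_poissonWeight_smul_pow_apply (hT : T.IsSymmetric)
    (hN : Module.finrank ℂ E = N) (t : ℝ) (v : E) :
    HasSum (fun k => (poissonWeight t k : ℂ) • (T ^ k) v)
      ((hT.eigenvectorBasis hN).repr.symm (WithLp.toLp 2 fun i =>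
        (Real.exp (t * (hT.eigenvalues hN i - 1)) : ℂ) * (hT.eigenvectorBasis hN).repr v i)) := by
  set b := hT.eigenvectorBasis hN
  let e := b.repr.toContinuousLinearEquiv.trans (PiLp.continuousLinearEquiv 2 ℂ _)
  refine (e.hasSum (y := fun i => _)).mp (Pi.hasSum.mpr fun i => ?_)
  have h := (Complex.hasSum_ofReal.mpr
    (hasSum_poissonWeight_mul_pow t (hT.eigenvalues hN i))).mul_right (b.repr v i)
  simp only [e, ContinuousLinearEquiv.trans_apply, LinearIsometryEquiv.coe_toContinuousLinearEquiv,
    PiLp.continuousLinearEquiv_apply, map_smul, Pi.smul_apply, smul_eq_mul,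
    b, hT.eigenvectorBasis_repr_pow_apply]
  simp only [Complex.ofReal_mul, Complex.ofReal_pow, mul_assoc] at h
  exact h

theorem LinearMap.IsSymmetric.norm_pow_apply_le_norm_tsum_poissonWeight (hT : T.IsSymmetric)
    (hT0 : ∀ μ : ℝ, HasEigenvalue T μ → 0 ≤ μ) (n : ℕ) (v : E) :
    ‖(T ^ n) v‖ ≤ ‖∑' k, (poissonWeight n k : ℂ) • (T ^ k) v‖ := by
  set b := hT.eigenvectorBasis rfl
  rw [(hT.hasSum_poissonWeight_smul_pow_apply rfl n v).tsum_eq, LinearIsometryEquiv.norm_map,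
    ← LinearIsometryEquiv.norm_map b.repr, EuclideanSpace.norm_eq, EuclideanSpace.norm_eq]
  gcongr with i
  simp only [b, hT.eigenvectorBasis_repr_pow_apply, norm_mul, norm_pow, Complex.norm_real,
    Real.norm_eq_abs]
  have hμ := hT0 (hT.eigenvalues rfl i) (hT.hasEigenvalue_eigenvalues rfl i)
  gcongr
  rw [abs_of_nonneg hμ, abs_of_pos (Real.exp_pos _), Real.exp_nat_mul]
  gcongr
  linarith [Real.add_one_le_exp (hT.eigenvalues rfl i - 1)]

end PoissonSemigroup

abbrev MatL2 (d : ℕ) := EuclideanSpace ℂ (Fin d × Fin d)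

def toL2 : Mat d ≃ₗ[ℂ] MatL2 d where
  toFun A := WithLp.toLp 2 fun p => A p.1 p.2
  invFun x := Matrix.of fun i j => x (i, j)
  map_add' _ _ := rfl
  map_smul' _ _ := rfl
  left_inv _ := rfl
  right_inv _ := rfl

theorem inner_toL2 (A B : Mat d) : ⟪toL2 A, toL2 B⟫_ℂ = (Aᴴ * B).trace := by
  simp only [PiLp.inner_apply, RCLike.inner_apply, Matrix.trace, Matrix.diag, Matrix.mul_apply,
    Matrix.conjTranspose_apply, toL2, Fintype.sum_prod_type]
  simp only [mul_comm, Complex.star_def]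
  rw [Finset.sum_comm]
  rfl

theorem norm_toL2_sq (A : Mat d) : ‖toL2 A‖ ^ 2 = (Aᴴ * A).trace.re := by
  rw [← inner_toL2, ← inner_self_eq_norm_sq (𝕜 := ℂ)]
  rfl

section MatPow

variable {σ : Mat d}

theorem conjTranspose_matPow (r : ℝ) : (matPow σ r)ᴴ = matPow σ r :=
  (cfc_predicate _ σ : IsSelfAdjoint (matPow σ r))

variable (hσ : σ.PosDef)
include hσ

theorem matPow_mul_matPow_s17 (r s : ℝ) : matPow σ r * matPow σ s = matPow σ (r + s) := by
  have hspec : ∀ x ∈ spectrum ℝ σ, 0 < x := fun x hx => by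
    rw [hσ.1.spectrum_real_eq_range_eigenvalues] at hx
    obtain ⟨i, rfl⟩ := hx
    exact hσ.eigenvalues_pos i
  rw [matPow, matPow, ← cfc_mul _ _ σ (Matrix.finite_real_spectrum.continuousOn _)
    (Matrix.finite_real_spectrum.continuousOn _)]
  exact cfc_congr fun x hx => (Real.rpow_add (hspec x hx) r s).symm

theorem matPow_zero_s17 : matPow σ 0 = 1 := by
  simp only [matPow, Real.rpow_zero]
  exact cfc_const_one ℝ σ hσ.1.isSelfAdjoint

theorem matPow_one_s17 : matPow σ 1 = σ := by
  simp only [matPow, Real.rpow_one]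
  exact cfc_id' ℝ σ hσ.1.isSelfAdjoint

theorem matPow_mul_matPow_neg (r : ℝ) : matPow σ r * matPow σ (-r) = 1 := by
  rw [matPow_mul_matPow_s17 hσ, add_neg_cancel, matPow_zero_s17 hσ]

theorem matPow_neg_mul_matPow (r : ℝ) : matPow σ (-r) * matPow σ r = 1 := by
  rw [matPow_mul_matPow_s17 hσ, neg_add_cancel, matPow_zero_s17 hσ]

theorem matPow_conj_matPow_neg_conj (r : ℝ) (Z : Mat d) :
    matPow σ r * (matPow σ (-r) * Z * matPow σ (-r)) * matPow σ r = Z := by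
  simp only [← Matrix.mul_assoc, matPow_mul_matPow_neg hσ, Matrix.one_mul]
  simp only [Matrix.mul_assoc, matPow_neg_mul_matPow hσ, Matrix.mul_one]

theorem matPow_neg_conj_matPow_conj (r : ℝ) (Z : Mat d) :
    matPow σ (-r) * (matPow σ r * Z * matPow σ r) * matPow σ (-r) = Z := by
  simp only [← Matrix.mul_assoc, matPow_neg_mul_matPow hσ, Matrix.one_mul]
  simp only [Matrix.mul_assoc, matPow_mul_matPow_neg hσ, Matrix.mul_one]

theorem re_trace_mul_conjTranspose_mul_self (M : Mat d) :
    (σ * (Mᴴ * M)).trace.re = ‖toL2 (M * matPow σ (1 / 2))‖ ^ 2 := by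
  have hσ' : σ = matPow σ (1 / 2) * matPow σ (1 / 2) := by
    rw [matPow_mul_matPow_s17 hσ]; norm_num [matPow_one_s17 hσ]
  conv_lhs => rw [hσ']
  rw [norm_toL2_sq, conjTranspose_mul, conjTranspose_matPow, Matrix.mul_assoc,
    Matrix.trace_mul_comm (matPow σ (1 / 2))]
  simp only [Matrix.mul_assoc]

theorem re_trace_mul_conjTranspose_mul_self_pos {M : Mat d} (hM : M ≠ 0) :
    0 < (σ * (Mᴴ * M)).trace.re := by
  rw [re_trace_mul_conjTranspose_mul_self hσ]
  refine pow_pos (norm_pos_iff.mpr fun h => hM ?_) 2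
  rw [← Matrix.mul_one M, ← matPow_mul_matPow_neg hσ (1 / 2), ← Matrix.mul_assoc,
    toL2.map_eq_zero_iff.mp h, Matrix.zero_mul]

end MatPow

def lazy (S : Module.End ℂ (Mat d)) : Module.End ℂ (Mat d) :=
  (2 : ℂ)⁻¹ • (LinearMap.id + S)

theorem apply_eq_self_of_lazy_apply_eq_self {S : Module.End ℂ (Mat d)} {X : Mat d}
    (h : lazy S X = X) : S X = X := by
  rw [lazy, LinearMap.smul_apply, inv_smul_eq_iff₀ two_ne_zero, two_smul] at h
  exact add_left_cancel h

section Kraus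

variable {ι : Type*} [Fintype ι]

def kraus (K : ι → Mat d) : Module.End ℂ (Mat d) :=
  ∑ j, LinearMap.mulLeftRight ℂ (K j, (K j)ᴴ)

def krausDual (K : ι → Mat d) : Module.End ℂ (Mat d) :=
  ∑ j, LinearMap.mulLeftRight ℂ ((K j)ᴴ, K j)

variable {K : ι → Mat d}

theorem kraus_apply (X : Mat d) : kraus K X = ∑ j, K j * X * (K j)ᴴ := by
  simp [kraus]

theorem krausDual_apply (X : Mat d) : krausDual K X = ∑ j, (K j)ᴴ * X * K j := by
  simp [krausDual]

theorem conjTranspose_kraus_apply (X : Mat d) : (kraus K X)ᴴ = kraus K Xᴴ := by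
  simp [kraus_apply, conjTranspose_sum, Matrix.mul_assoc]

theorem conjTranspose_krausDual_apply (X : Mat d) : (krausDual K X)ᴴ = krausDual K Xᴴ := by
  simp [krausDual_apply, conjTranspose_sum, Matrix.mul_assoc]

theorem trace_kraus_apply_mul (X Y : Mat d) :
    (kraus K X * Y).trace = (X * krausDual K Y).trace := by
  simp only [kraus_apply, krausDual_apply, Finset.sum_mul, Finset.mul_sum, Matrix.trace_sum]
  refine Finset.sum_congr rfl fun j _ => ?_
  simp only [Matrix.mul_assoc]
  rw [Matrix.trace_mul_comm (K j)]
  simp only [Matrix.mul_assoc]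

/-- Kadison–Schwarz inequality for the unital map `krausDual K`, with its sum-of-squares defect. -/
theorem krausDual_conjTranspose_mul_self_sub_eq_sum (hK : ∑ j, (K j)ᴴ * K j = 1) (A : Mat d) :
    krausDual K (Aᴴ * A) - (krausDual K A)ᴴ * krausDual K A
      = ∑ j, (A * K j - K j * krausDual K A)ᴴ * (A * K j - K j * krausDual K A) := by
  set B := krausDual K A
  have hB : ∑ j, (K j)ᴴ * Aᴴ * K j = Bᴴ := by rw [conjTranspose_krausDual_apply, krausDual_apply]
  have hterm : ∀ j, (A * K j - K j * B)ᴴ * (A * K j - K j * B)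
      = (K j)ᴴ * (Aᴴ * A) * K j - (K j)ᴴ * Aᴴ * K j * B - Bᴴ * ((K j)ᴴ * A * K j)
        + Bᴴ * ((K j)ᴴ * K j) * B := fun j => by
    simp only [conjTranspose_sub, conjTranspose_mul]
    noncomm_ring
  simp only [hterm, Finset.sum_add_distrib, Finset.sum_sub_distrib, ← Finset.sum_mul,
    ← Finset.mul_sum, hB, hK, ← krausDual_apply]
  noncomm_ring

theorem abs_le_one_of_krausDual_apply_eq_smul {σ : Mat d} (hσ : σ.PosDef)
    (hK : ∑ j, (K j)ᴴ * K j = 1) (hfix : kraus K σ = σ) {c : ℝ} {Y : Mat d} (hY : Y ≠ 0)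
    (h : krausDual K Y = (c : ℂ) • Y) : |c| ≤ 1 := by
  have hschwarz : (σ * ((krausDual K Y)ᴴ * krausDual K Y)).trace.re
      ≤ (σ * krausDual K (Yᴴ * Y)).trace.re := by
    have hgap : 0 ≤ (σ * (krausDual K (Yᴴ * Y) - (krausDual K Y)ᴴ * krausDual K Y)).trace.re := by
      rw [krausDual_conjTranspose_mul_self_sub_eq_sum hK, Finset.mul_sum, Matrix.trace_sum,
        Complex.re_sum]
      exact Finset.sum_nonneg fun j _ => by
        rw [re_trace_mul_conjTranspose_mul_self hσ]; positivity
    rw [Matrix.mul_sub, Matrix.trace_sub, Complex.sub_re] at hgap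
    linarith
  rw [← trace_kraus_apply_mul, hfix, h, conjTranspose_smul, Complex.star_def, Complex.conj_ofReal,
    smul_mul_smul_comm, Matrix.mul_smul, Matrix.trace_smul, smul_eq_mul, ← Complex.ofReal_mul,
    Complex.re_ofReal_mul] at hschwarz
  have hpos := re_trace_mul_conjTranspose_mul_self_pos hσ hY
  rw [← sq_le_one_iff_abs_le_one, sq]
  nlinarith

end Kraus

def IsReversible (σ : Mat d) (T : Module.End ℂ (Mat d)) : Prop :=
  ∀ A B : Mat d, (matPow σ (-(1/2)) * Aᴴ * matPow σ (-(1/2)) * T B).trace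
    = (matPow σ (-(1/2)) * (T A)ᴴ * matPow σ (-(1/2)) * B).trace

theorem krausDual_apply_eq_smul_of_lazy_apply_eq_smul {ι : Type*} [Fintype ι] {K : ι → Mat d}
    {σ : Mat d} (hrev : IsReversible σ (lazy (kraus K))) {μ : ℝ} {B : Mat d}
    (hB : lazy (kraus K) B = (μ : ℂ) • B) :
    krausDual K (matPow σ (-(1/2)) * Bᴴ * matPow σ (-(1/2)))
      = ((2 * μ - 1 : ℝ) : ℂ) • (matPow σ (-(1/2)) * Bᴴ * matPow σ (-(1/2))) := by
  set Y := matPow σ (-(1/2)) * Bᴴ * matPow σ (-(1/2))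
  refine Matrix.ext_iff_trace_mul_right.mpr fun X => ?_
  have key := hrev B X
  rw [hB] at key
  simp only [conjTranspose_smul, Complex.star_def, Complex.conj_ofReal, lazy,
    LinearMap.smul_apply, LinearMap.add_apply, LinearMap.id_apply] at key
  rw [Matrix.trace_mul_comm, ← trace_kraus_apply_mul, Matrix.trace_mul_comm]
  simp only [Matrix.mul_smul, Matrix.smul_mul, Matrix.mul_add, Matrix.trace_smul, Matrix.trace_add,
    smul_eq_mul] at key ⊢
  push_cast
  linear_combination (2 : ℂ) * key

section SimTransform

variable {σ : Mat d} {T : Module.End ℂ (Mat d)}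

/-- `Γ_σ^{-1/2} ∘ T* ∘ Γ_σ^{1/2}`, the Hilbert–Schmidt adjoint of the paper's
`Γ_σ^{1/2} ∘ T ∘ Γ_σ^{-1/2}`. -/
def simTransform (σ : Mat d) (T : Module.End ℂ (Mat d)) : Module.End ℂ (MatL2 d) :=
  toL2.toLinearMap ∘ₗ LinearMap.mulLeftRight ℂ (matPow σ (-(1/4)), matPow σ (-(1/4))) ∘ₗ T ∘ₗ
    LinearMap.mulLeftRight ℂ (matPow σ (1/4), matPow σ (1/4)) ∘ₗ toL2.symm.toLinearMap

theorem simTransform_toL2 (A : Mat d) :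
    simTransform σ T (toL2 A) = toL2 (matPow σ (-(1/4)) * T (matPow σ (1/4) * A * matPow σ (1/4))
      * matPow σ (-(1/4))) := by
  simp [simTransform]

variable (hσ : σ.PosDef)
include hσ

theorem simTransform_pow_toL2 (k : ℕ) (Z : Mat d) :
    (simTransform σ T ^ k) (toL2 (matPow σ (-(1/4)) * Z * matPow σ (-(1/4))))
      = toL2 (matPow σ (-(1/4)) * (T ^ k) Z * matPow σ (-(1/4))) := by
  induction k with
  | zero => rfl
  | succ k ih =>
    rw [pow_succ', Module.End.mul_apply, ih, simTransform_toL2, matPow_conj_matPow_neg_conj hσ,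
      pow_succ', Module.End.mul_apply]

theorem simTransform_isSymmetric (hrev : IsReversible σ T) : (simTransform σ T).IsSymmetric := by
  intro x y
  obtain ⟨A, rfl⟩ := toL2.surjective x
  obtain ⟨B, rfl⟩ := toL2.surjective y
  rw [simTransform_toL2, simTransform_toL2, inner_toL2, inner_toL2]
  have hmp : matPow σ (-(1/2)) * matPow σ (1/4) = matPow σ (-(1/4)) := by
    rw [matPow_mul_matPow_s17 hσ]; norm_num
  have hpm : matPow σ (1/4) * matPow σ (-(1/2)) = matPow σ (-(1/4)) := by
    rw [matPow_mul_matPow_s17 hσ]; norm_num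
  set p := matPow σ (1/4)
  set q := matPow σ (-(1/4))
  set m := matPow σ (-(1/2))
  have hq : qᴴ = q := conjTranspose_matPow _
  have hp : pᴴ = p := conjTranspose_matPow _
  calc ((q * T (p * A * p) * q)ᴴ * B).trace
      = (p * (m * (T (p * A * p))ᴴ * m * p * B)).trace := by
        rw [show p * (m * (T (p * A * p))ᴴ * m * p * B)
            = p * m * (T (p * A * p))ᴴ * (m * p) * B by simp only [Matrix.mul_assoc],
          hpm, hmp, conjTranspose_mul, conjTranspose_mul, hq]
        simp only [Matrix.mul_assoc]
    _ = (m * (T (p * A * p))ᴴ * m * (p * B * p)).trace := by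
        rw [Matrix.trace_mul_comm]
        simp only [Matrix.mul_assoc]
    _ = (m * (p * A * p)ᴴ * m * T (p * B * p)).trace := (hrev _ _).symm
    _ = (Aᴴ * (q * T (p * B * p) * q)).trace := by
        rw [conjTranspose_mul, conjTranspose_mul, hp,
          show m * (p * (Aᴴ * p)) * m = m * p * Aᴴ * (p * m) by simp only [Matrix.mul_assoc],
          hmp, hpm, Matrix.mul_assoc, Matrix.mul_assoc, Matrix.trace_mul_comm q]
        simp only [Matrix.mul_assoc]

theorem exists_apply_eq_smul_of_hasEigenvalue_simTransform {μ : ℝ}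
    (hμ : HasEigenvalue (simTransform σ T) μ) : ∃ B ≠ 0, T B = (μ : ℂ) • B := by
  obtain ⟨y, hy⟩ := hμ.exists_hasEigenvector
  obtain ⟨A, rfl⟩ := toL2.surjective y
  refine ⟨matPow σ (1/4) * A * matPow σ (1/4), fun h => hy.2 ?_, ?_⟩
  · rw [← matPow_neg_conj_matPow_conj hσ (1/4) A, h]
    simp
  · have h := hy.apply_eq_smul
    rw [simTransform_toL2, ← map_smul, toL2.injective.eq_iff] at h
    rw [← matPow_conj_matPow_neg_conj hσ (1/4) (T _), h, Matrix.mul_smul, Matrix.smul_mul]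

end SimTransform

theorem nonneg_of_hasEigenvalue_simTransform_lazy_kraus {ι : Type*} [Fintype ι] {K : ι → Mat d}
    {σ : Mat d} (hσ : σ.PosDef) (hK : ∑ j, (K j)ᴴ * K j = 1) (hfix : kraus K σ = σ)
    (hrev : IsReversible σ (lazy (kraus K))) {μ : ℝ}
    (hμ : HasEigenvalue (simTransform σ (lazy (kraus K))) μ) : 0 ≤ μ := by
  obtain ⟨B, hB0, hB⟩ := exists_apply_eq_smul_of_hasEigenvalue_simTransform hσ hμ
  have hY : matPow σ (-(1/2)) * Bᴴ * matPow σ (-(1/2)) ≠ 0 := fun h => hB0 <| by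
    rw [← conjTranspose_conjTranspose B, ← matPow_conj_matPow_neg_conj hσ (1/2) Bᴴ, h]
    simp
  have h := abs_le_one_of_krausDual_apply_eq_smul hσ hK hfix hY
    (krausDual_apply_eq_smul_of_lazy_apply_eq_smul hrev hB)
  linarith [(abs_le.mp h).1]

theorem chi2_eq_norm_sq {σ X : Mat d} (hσ : σ.PosDef) (hX : Xᴴ = X) :
    chi2 X σ = ‖toL2 (matPow σ (-(1/4)) * (X - σ) * matPow σ (-(1/4)))‖ ^ 2 := by
  have hqq : matPow σ (-(1/4)) * matPow σ (-(1/4)) = matPow σ (-(1/2)) := by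
    rw [matPow_mul_matPow_s17 hσ]; norm_num
  rw [chi2, norm_toL2_sq, ← hqq, conjTranspose_mul, conjTranspose_mul, conjTranspose_sub, hX,
    hσ.1.eq, conjTranspose_matPow]
  simp only [Matrix.mul_assoc]
  rw [Matrix.trace_mul_comm (matPow σ (-(1/4)))]
  simp only [Matrix.mul_assoc]

section Hermitian

variable {T : Module.End ℂ (Mat d)}

theorem conjTranspose_lazy_kraus_apply {ι : Type*} [Fintype ι] {K : ι → Mat d} (X : Mat d) :
    (lazy (kraus K) X)ᴴ = lazy (kraus K) Xᴴ := by
  simp [lazy, conjTranspose_kraus_apply]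

theorem conjTranspose_pow_apply (hT : ∀ X, (T X)ᴴ = T Xᴴ) (k : ℕ) (X : Mat d) :
    ((T ^ k) X)ᴴ = (T ^ k) Xᴴ := by
  induction k with
  | zero => rfl
  | succ k ih => rw [pow_succ', Module.End.mul_apply, hT, ih, Module.End.mul_apply]

theorem conjTranspose_contT (hT : ∀ X, (T X)ᴴ = T Xᴴ) (t : ℝ) {ρ : Mat d} (hρ : ρᴴ = ρ) :
    (contT T t ρ)ᴴ = contT T t ρ := by
  rw [contT, ← Matrix.star_eq_conjTranspose, tsum_star]
  congr 1
  ext1 k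
  rw [star_smul, Matrix.star_eq_conjTranspose, conjTranspose_pow_apply hT, hρ, Complex.star_def,
    Complex.conj_ofReal]

end Hermitian

section Transport

variable {σ : Mat d} {T : Module.End ℂ (Mat d)} (hσ : σ.PosDef) (hstat : T σ = σ)
include hσ hstat

theorem toL2_pow_apply_sub (k : ℕ) (ρ : Mat d) :
    toL2 (matPow σ (-(1/4)) * ((T ^ k) ρ - σ) * matPow σ (-(1/4)))
      = (simTransform σ T ^ k) (toL2 (matPow σ (-(1/4)) * (ρ - σ) * matPow σ (-(1/4)))) := by
  rw [simTransform_pow_toL2 hσ, map_sub, Module.End.pow_apply T k σ, Function.iterate_fixed hstat]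

theorem toL2_contT_sub (t : ℝ) (ρ : Mat d)
    (hsum : Summable fun k => (poissonWeight t k : ℂ) • (simTransform σ T ^ k)
      (toL2 (matPow σ (-(1/4)) * (ρ - σ) * matPow σ (-(1/4))))) :
    toL2 (matPow σ (-(1/4)) * (contT T t ρ - σ) * matPow σ (-(1/4)))
      = ∑' k, (poissonWeight t k : ℂ) • (simTransform σ T ^ k)
          (toL2 (matPow σ (-(1/4)) * (ρ - σ) * matPow σ (-(1/4)))) := by
  set x := toL2 (matPow σ (-(1/4)) * (ρ - σ) * matPow σ (-(1/4)))
  let J : MatL2 d →L[ℂ] Mat d := (LinearMap.mulLeftRight ℂ (matPow σ (1/4), matPow σ (1/4)) ∘ₗ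
    toL2.symm.toLinearMap).toContinuousLinearMap
  have hJ : ∀ k, J ((simTransform σ T ^ k) x) = (T ^ k) ρ - σ := fun k => by
    rw [← toL2_pow_apply_sub hσ hstat]
    simp [J, matPow_conj_matPow_neg_conj hσ]
  have hweights : HasSum (fun k => (poissonWeight t k : ℂ)) 1 := by
    simpa using Complex.hasSum_ofReal.mpr (hasSum_poissonWeight_mul_pow t 1)
  have hcontT : HasSum (fun k => (poissonWeight t k : ℂ) • (T ^ k) ρ) (J (∑' k,
      (poissonWeight t k : ℂ) • (simTransform σ T ^ k) x) + σ) := by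
    convert (J.hasSum hsum.hasSum).add (hweights.smul_const σ) using 1
    · ext1 k
      rw [map_smul, hJ, ← smul_add, sub_add_cancel]
    · rw [one_smul]
  rw [show contT T t ρ = _ from hcontT.tsum_eq, add_sub_cancel_right]
  simp [J, matPow_neg_conj_matPow_conj hσ]

end Transport

theorem lazy_discrete_vs_continuous_chi2_general (σ : Mat d)
    (hσ : σ.PosDef)
    (Tstar S : Module.End ℂ (Mat d))
    -- `T` is lazy: `T = (id + S)/2` for a quantum channel `S`
    (hlazy : Tstar = (2 : ℂ)⁻¹ • (LinearMap.id + S))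
    (hS : ∃ (ι : Type) (_ : Fintype ι) (K : ι → Mat d),
        (∀ ρ : Mat d, S ρ = ∑ j, K j * ρ * (K j)ᴴ) ∧ ∑ j, (K j)ᴴ * K j = (1 : Mat d))
    -- `σ` is stationary and `T` is primitive (unique stationary state)
    (hstat : Tstar σ = σ)
    -- reversibility: `T*` is selfadjoint w.r.t. the σ-weighted inner product
    (hrev : ∀ A B : Mat d,
        (matPow σ (-(1/2)) * Aᴴ * matPow σ (-(1/2)) * Tstar B).trace
          = (matPow σ (-(1/2)) * (Tstar A)ᴴ * matPow σ (-(1/2)) * B).trace)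
    (ρ : Mat d) (hρ : ρ.PosSemidef) (n : ℕ) :
    chi2 ((Tstar ^ n) ρ) σ ≤ chi2 (contT Tstar (n : ℝ) ρ) σ := by
  obtain ⟨ι, _, K, hSK, hK⟩ := hS
  obtain rfl : S = kraus K := LinearMap.ext fun X => by rw [hSK, kraus_apply]
  obtain rfl : Tstar = lazy (kraus K) := hlazy
  have hfix : kraus K σ = σ := apply_eq_self_of_lazy_apply_eq_self hstat
  have hΦ := simTransform_isSymmetric hσ hrev
  have hherm := conjTranspose_lazy_kraus_apply (K := K)
  set x := toL2 (matPow σ (-(1/4)) * (ρ - σ) * matPow σ (-(1/4)))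
  rw [chi2_eq_norm_sq hσ ((conjTranspose_pow_apply hherm n ρ).trans (congrArg _ hρ.1)),
    chi2_eq_norm_sq hσ (conjTranspose_contT hherm _ hρ.1), toL2_pow_apply_sub hσ hstat,
    toL2_contT_sub hσ hstat _ _ (hΦ.hasSum_poissonWeight_smul_pow_apply rfl n x).summable]
  gcongr
  exact hΦ.norm_pow_apply_le_norm_tsum_poissonWeight
    (fun _ => nonneg_of_hasEigenvalue_simTransform_lazy_kraus hσ hK hfix hrev) n x

/-- for a lazy, primitive, reversible quantum channel, the discrete
iterates converge at least as fast in χ² as the continuous-time semigroup generated by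
`L = T − id`: `χ²(T*ⁿ(ρ),σ) ≤ χ²(T*_n(ρ),σ)`. -/
theorem lazy_discrete_vs_continuous_chi2 (σ : Mat d)
    (hσ : σ.PosDef) (hσ1 : σ.trace = 1)
    (Tstar S : Module.End ℂ (Mat d))
    -- `T` is lazy: `T = (id + S)/2` for a quantum channel `S`
    (hlazy : Tstar = (2 : ℂ)⁻¹ • (LinearMap.id + S))
    (hS : ∃ (ι : Type) (_ : Fintype ι) (K : ι → Mat d),
        (∀ ρ : Mat d, S ρ = ∑ j, K j * ρ * (K j)ᴴ) ∧ ∑ j, (K j)ᴴ * K j = (1 : Mat d))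
    -- `σ` is stationary and `T` is primitive (unique stationary state)
    (hstat : Tstar σ = σ)
    (hprim : ∀ ρ : Mat d, ρ.PosSemidef → ρ.trace = 1 → Tstar ρ = ρ → ρ = σ)
    -- reversibility: `T*` is selfadjoint w.r.t. the σ-weighted inner product
    (hrev : ∀ A B : Mat d,
        (matPow σ (-(1/2)) * Aᴴ * matPow σ (-(1/2)) * Tstar B).trace
          = (matPow σ (-(1/2)) * (Tstar A)ᴴ * matPow σ (-(1/2)) * B).trace)
    (ρ : Mat d) (hρ : ρ.PosSemidef) (hρ1 : ρ.trace = 1) (n : ℕ) (hn : 0 < n) :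
    chi2 ((Tstar ^ n) ρ) σ ≤ chi2 (contT Tstar (n : ℝ) ρ) σ :=
  lazy_discrete_vs_continuous_chi2_general σ hσ Tstar S hlazy hS hstat hrev ρ hρ n
end
end
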